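/- arXiv:2012.05971 — 4 statements merged into one kernel-verified Lean document; each statement's English description precedes it below -/
import Mathlib

section
/- There are no traveling wave solutions with nonzero speed: if φ : ℝ → ℝ is a C² function with φ' > 0 on (ω₋, ω₊), φ(ω₋) = -1, φ(ω₊) = 1, D(φ)(φ')² vanishes at ω₋ and ω₊, and -c φ' = ε² D(φ) φ'' + (ε²/2) D'(φ) (φ')² - F'(φ) on (ω₋, ω₊), where F(±1) = 0 and ∫ (φ')² > 0, then c = 0. -/
open Set intervalIntegral

/-!
Multiplying the traveling wave equation by `φ'` exhibits `-c φ'²` as the derivative of the energy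
`(ε²/2) D(φ) φ'² - F(φ)`. The energy vanishes at both ends of the interval, by the degeneracy
conditions and `F(±1) = 0`, so `c ∫ φ'² = 0`, and `∫ φ'² > 0` forces `c = 0`.
-/

noncomputable def travelingWaveEnergy (ε : ℝ) (D F φ : ℝ → ℝ) (x : ℝ) : ℝ :=
  ε ^ 2 / 2 * D (φ x) * deriv φ x ^ 2 - F (φ x)

theorem hasDerivAt_travelingWaveEnergy {ε : ℝ} {D F φ : ℝ → ℝ} {x : ℝ}
    (hD : DifferentiableAt ℝ D (φ x)) (hF : DifferentiableAt ℝ F (φ x))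
    (hφ : DifferentiableAt ℝ φ x) (hφ' : DifferentiableAt ℝ (deriv φ) x) :
    HasDerivAt (travelingWaveEnergy ε D F φ)
      ((ε ^ 2 * D (φ x) * deriv (deriv φ) x + ε ^ 2 / 2 * deriv D (φ x) * deriv φ x ^ 2
        - deriv F (φ x)) * deriv φ x) x := by
  have hDφ := hD.hasDerivAt.comp x hφ.hasDerivAt
  have hFφ := hF.hasDerivAt.comp x hφ.hasDerivAt
  refine (((hDφ.const_mul (ε ^ 2 / 2)).mul (hφ'.hasDerivAt.fun_pow 2)).sub hFφ).congr_deriv ?_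
  simp only [Function.comp_apply, Nat.cast_ofNat, pow_one, Nat.add_one_sub_one]
  ring

theorem continuous_travelingWaveEnergy {ε : ℝ} {D F φ : ℝ → ℝ} (hD : Continuous D)
    (hF : Continuous F) (hφ : Continuous φ) (hφ' : Continuous (deriv φ)) :
    Continuous (travelingWaveEnergy ε D F φ) := by
  unfold travelingWaveEnergy
  fun_prop

theorem travelingWaveEnergy_eq_zero {ε : ℝ} {D F φ : ℝ → ℝ} {x : ℝ}
    (hdeg : D (φ x) * deriv φ x ^ 2 = 0) (hF : F (φ x) = 0) :
    travelingWaveEnergy ε D F φ x = 0 := by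
  rw [travelingWaveEnergy, mul_assoc, hdeg, hF, mul_zero, sub_zero]

theorem no_nonzero_speed_traveling_wave_general
    (D F φ : ℝ → ℝ) (c ε ωm ωp : ℝ)
    (hω : ωm < ωp)
    (hD : ContDiff ℝ 1 D)
    (hF : ContDiff ℝ 1 F) (hFm1 : F (-1) = 0) (hFp1 : F 1 = 0)
    (hφ : ContDiff ℝ 2 φ)
    (hbc1 : φ ωm = -1) (hbc2 : φ ωp = 1)
    (hdeg1 : D (φ ωm) * (deriv φ ωm) ^ 2 = 0)
    (hdeg2 : D (φ ωp) * (deriv φ ωp) ^ 2 = 0)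
    (heq : ∀ x ∈ Ioo ωm ωp,
      -c * deriv φ x =
        ε ^ 2 * D (φ x) * deriv (deriv φ) x
          + ε ^ 2 / 2 * deriv D (φ x) * (deriv φ x) ^ 2 - deriv F (φ x))
    (hint : 0 < ∫ x in ωm..ωp, (deriv φ x) ^ 2) :
    c = 0 := by
  have hφ' : Continuous (deriv φ) := hφ.continuous_deriv (by norm_num)
  have henergy : ∀ x ∈ Ioo ωm ωp,
      HasDerivAt (travelingWaveEnergy ε D F φ) (-c * deriv φ x ^ 2) x := by
    intro x hx
    convert hasDerivAt_travelingWaveEnergy (hD.differentiable one_ne_zero _)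
      (hF.differentiable one_ne_zero _) (hφ.differentiable two_ne_zero x)
      (hφ.differentiable_deriv_two x) using 1
    rw [← heq x hx]
    ring
  have hFTC := integral_eq_sub_of_hasDerivAt_of_le hω.le
    (continuous_travelingWaveEnergy hD.continuous hF.continuous hφ.continuous hφ').continuousOn
    henergy ((by fun_prop : Continuous fun x => -c * deriv φ x ^ 2).intervalIntegrable _ _)
  rw [travelingWaveEnergy_eq_zero hdeg2 (hbc2 ▸ hFp1),
    travelingWaveEnergy_eq_zero hdeg1 (hbc1 ▸ hFm1), sub_self, integral_const_mul] at hFTC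
  simpa [hint.ne'] using hFTC

/-- No traveling waves with nonzero speed for the generalized Allen--Cahn equation. -/
theorem no_nonzero_speed_traveling_wave
    (D F φ : ℝ → ℝ) (c ε ωm ωp : ℝ)
    (hε : 0 < ε) (hω : ωm < ωp)
    (hD : ContDiff ℝ 1 D) (hDpos : ∀ u, 0 ≤ D u)
    (hF : ContDiff ℝ 1 F) (hFm1 : F (-1) = 0) (hFp1 : F 1 = 0)
    (hφ : ContDiff ℝ 2 φ)
    (hmono : ∀ x ∈ Ioo ωm ωp, 0 < deriv φ x)
    (hbc1 : φ ωm = -1) (hbc2 : φ ωp = 1)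
    (hdeg1 : D (φ ωm) * (deriv φ ωm) ^ 2 = 0)
    (hdeg2 : D (φ ωp) * (deriv φ ωp) ^ 2 = 0)
    (heq : ∀ x ∈ Ioo ωm ωp,
      -c * deriv φ x =
        ε ^ 2 * D (φ x) * deriv (deriv φ) x
          + ε ^ 2 / 2 * deriv D (φ x) * (deriv φ x) ^ 2 - deriv F (φ x))
    (hint : 0 < ∫ x in ωm..ωp, (deriv φ x) ^ 2) :
    c = 0 :=
  no_nonzero_speed_traveling_wave_general D F φ c ε ωm ωp hω hD hF hFm1 hFp1 hφ hbc1 hbc2 hdeg1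
    hdeg2 heq hint
end

section
/- If u ∈ H¹(c,d) with u(c) = -1 and u(d) = 1, then for every ε > 0, ∫_c^d [ (ε/2) D(u) u_x² + F(u)/ε ] dx ≥ γ, where γ := ∫_{-1}^{1} √(2 D(s) F(s)) ds and D, F are continuous nonnegative functions. -/
open Set intervalIntegral

/-!
Substituting `s = u x` turns `γ` into `∫_c^d u' · √(2 D(u) F(u))`, and pointwise this integrand is
at most the energy density by Young's inequality `p q ≤ (p² + q²)/2` with `p = √(ε D(u)) u'` and
`q = √(2 F(u)/ε)`.
-/

lemma mul_sqrt_two_mul_mul_le {a b ε : ℝ} (ha : 0 ≤ a) (hb : 0 ≤ b) (hε : 0 < ε) (v : ℝ) :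
    v * Real.sqrt (2 * a * b) ≤ ε / 2 * a * v ^ 2 + b / ε := by
  set p := Real.sqrt (ε * a) * v
  set q := Real.sqrt (2 * b / ε)
  have hpq : p * q = v * Real.sqrt (2 * a * b) := by
    rw [mul_right_comm, ← Real.sqrt_mul (by positivity)]
    field_simp
  have hp : p ^ 2 = ε * a * v ^ 2 := by
    rw [mul_pow, Real.sq_sqrt (by positivity)]
  have hq : q ^ 2 = 2 * b / ε := Real.sq_sqrt (by positivity)
  calc v * Real.sqrt (2 * a * b) = p * q := hpq.symm
    _ ≤ (p ^ 2 + q ^ 2) / 2 := by linarith [two_mul_le_add_sq p q]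
    _ = ε / 2 * a * v ^ 2 + b / ε := by rw [hp, hq]; ring

theorem integral_sqrt_two_mul_le_integral_energy
    {D F u u' : ℝ → ℝ} {c d ε : ℝ} (hcd : c ≤ d) (hε : 0 < ε)
    (hD : Continuous D) (hDpos : ∀ s, 0 ≤ D s)
    (hF : Continuous F) (hFpos : ∀ s, 0 ≤ F s)
    (hu : ∀ x ∈ Icc c d, HasDerivAt u (u' x) x)
    (hu' : ContinuousOn u' (Icc c d)) :
    (∫ s in u c..u d, Real.sqrt (2 * D s * F s)) ≤
      ∫ x in c..d, (ε / 2 * D (u x) * (u' x) ^ 2 + F (u x) / ε) := by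
  set g : ℝ → ℝ := fun s => Real.sqrt (2 * D s * F s)
  have hg : Continuous g := ((continuous_const.mul hD).mul hF).sqrt
  have hIcc : uIcc c d = Icc c d := uIcc_of_le hcd
  have huc : ContinuousOn u (Icc c d) := fun x hx => (hu x hx).continuousAt.continuousWithinAt
  rw [← integral_comp_mul_deriv (hIcc ▸ hu) (hIcc ▸ hu') hg]
  refine integral_mono_on hcd ?_ ?_ fun x _ => ?_
  · exact ((hg.comp_continuousOn huc).mul hu').intervalIntegrable_of_Icc hcd
  · exact (((continuousOn_const.mul (hD.comp_continuousOn huc)).mul (hu'.pow 2)).add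
      ((hF.comp_continuousOn huc).div_const ε)).intervalIntegrable_of_Icc hcd
  · rw [Function.comp_apply, mul_comm]
    exact mul_sqrt_two_mul_mul_le (hDpos _) (hFpos _) hε _

/-- The minimal transition energy: any `H¹` function connecting `-1` to `1` on `(c,d)`
has energy at least `γ = ∫_{-1}^1 √(2 D F)`. -/
theorem energy_lower_bound_transition
    (D F u u' : ℝ → ℝ) (c d ε : ℝ) (hcd : c < d) (hε : 0 < ε)
    (hD : Continuous D) (hDpos : ∀ s, 0 ≤ D s)
    (hF : Continuous F) (hFpos : ∀ s, 0 ≤ F s)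
    (hu : ∀ x ∈ Icc c d, HasDerivAt u (u' x) x)
    (hu' : ContinuousOn u' (Icc c d))
    (huc : u c = -1) (hud : u d = 1) :
    (∫ s in (-1:ℝ)..1, Real.sqrt (2 * D s * F s)) ≤
      ∫ x in c..d, (ε / 2 * D (u x) * (u' x) ^ 2 + F (u x) / ε) := by
  rw [← huc, ← hud]
  exact integral_sqrt_two_mul_le_integral_energy hcd.le hε hD hDpos hF hFpos hu hu'
end

section
/- If ψ : [x₀, x₁] → ℝ is C² with ψ ≥ 0, ψ''(x) ≥ (μ²/(nε²)) ψ(x) on (x₀, x₁), ψ(x₀) = ψ₀ ≥ 0, and ψ'(x₁) = 0, then ψ(x₁) ≤ ψ₀ / cosh( (μ/(√n ε)) (x₁ - x₀) ). -/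
/-!
With `k = μ / (√n ε)`, the barrier `φ x = cosh (k (x₁ - x))` solves `φ'' = k² φ` and has
`φ' x₁ = 0`. The Wronskian `W = ψ' φ - ψ φ'` has derivative `(ψ'' - k² ψ) φ ≥ 0`, so
`W ≤ W x₁ = 0` on `[x₀, x₁]`. Since `(ψ / φ)' = W / φ²`, the ratio `ψ / φ` is antitone, and
comparing its values at `x₁` and `x₀` gives the bound.
-/

open Set Real

section Monotonicity

variable {f f' : ℝ → ℝ} {a b : ℝ}

lemma monotoneOn_Icc_of_hasDerivAt_nonneg (hf : ∀ x ∈ Icc a b, HasDerivAt f (f' x) x)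
    (hf'₀ : ∀ x ∈ Ioo a b, 0 ≤ f' x) : MonotoneOn f (Icc a b) :=
  monotoneOn_of_hasDerivWithinAt_nonneg (convex_Icc a b)
    (fun x hx => (hf x hx).continuousAt.continuousWithinAt)
    (by rw [interior_Icc]; exact fun x hx => (hf x (Ioo_subset_Icc_self hx)).hasDerivWithinAt)
    (by rwa [interior_Icc])

lemma antitoneOn_Icc_of_hasDerivAt_nonpos (hf : ∀ x ∈ Icc a b, HasDerivAt f (f' x) x)
    (hf'₀ : ∀ x ∈ Ioo a b, f' x ≤ 0) : AntitoneOn f (Icc a b) :=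
  antitoneOn_of_hasDerivWithinAt_nonpos (convex_Icc a b)
    (fun x hx => (hf x hx).continuousAt.continuousWithinAt)
    (by rw [interior_Icc]; exact fun x hx => (hf x (Ioo_subset_Icc_self hx)).hasDerivWithinAt)
    (by rwa [interior_Icc])

end Monotonicity

section Wronskian

variable {f f' f'' g g' g'' : ℝ → ℝ} {a b : ℝ}

lemma monotoneOn_wronskian (hf : ∀ x ∈ Icc a b, HasDerivAt f (f' x) x)
    (hf' : ∀ x ∈ Icc a b, HasDerivAt f' (f'' x) x) (hg : ∀ x ∈ Icc a b, HasDerivAt g (g' x) x)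
    (hg' : ∀ x ∈ Icc a b, HasDerivAt g' (g'' x) x)
    (hfg : ∀ x ∈ Ioo a b, f x * g'' x ≤ f'' x * g x) :
    MonotoneOn (fun x => f' x * g x - f x * g' x) (Icc a b) := by
  refine monotoneOn_Icc_of_hasDerivAt_nonneg (f' := fun x => f'' x * g x - f x * g'' x)
    (fun x hx => ?_) (fun x hx => sub_nonneg.mpr (hfg x hx))
  exact (((hf' x hx).mul (hg x hx)).sub ((hf x hx).mul (hg' x hx))).congr_deriv (by ring)

lemma antitoneOn_div_of_wronskian_nonpos (hf : ∀ x ∈ Icc a b, HasDerivAt f (f' x) x)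
    (hg : ∀ x ∈ Icc a b, HasDerivAt g (g' x) x) (hg₀ : ∀ x ∈ Icc a b, g x ≠ 0)
    (hW : ∀ x ∈ Ioo a b, f' x * g x - f x * g' x ≤ 0) :
    AntitoneOn (fun x => f x / g x) (Icc a b) :=
  antitoneOn_Icc_of_hasDerivAt_nonpos
    (fun x hx => (hf x hx).div (hg x hx) (hg₀ x hx))
    (fun x hx => div_nonpos_of_nonpos_of_nonneg (hW x hx) (sq_nonneg _))

lemma antitoneOn_div_of_wronskian_right_nonpos (hab : a ≤ b)
    (hf : ∀ x ∈ Icc a b, HasDerivAt f (f' x) x) (hf' : ∀ x ∈ Icc a b, HasDerivAt f' (f'' x) x)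
    (hg : ∀ x ∈ Icc a b, HasDerivAt g (g' x) x) (hg' : ∀ x ∈ Icc a b, HasDerivAt g' (g'' x) x)
    (hg₀ : ∀ x ∈ Icc a b, g x ≠ 0) (hfg : ∀ x ∈ Ioo a b, f x * g'' x ≤ f'' x * g x)
    (hWb : f' b * g b - f b * g' b ≤ 0) :
    AntitoneOn (fun x => f x / g x) (Icc a b) := by
  have hW := monotoneOn_wronskian hf hf' hg hg' hfg
  refine antitoneOn_div_of_wronskian_nonpos hf hg hg₀ fun x hx => ?_
  exact (hW (Ioo_subset_Icc_self hx) (right_mem_Icc.mpr hab) hx.2.le).trans hWb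

end Wronskian

section Barrier

variable (k b x : ℝ)

lemma hasDerivAt_cosh_mul_sub :
    HasDerivAt (fun y => cosh (k * (b - y))) (-k * sinh (k * (b - x))) x :=
  (((hasDerivAt_id x).const_sub b).const_mul k).cosh.congr_deriv (by simp only [id]; ring)

lemma hasDerivAt_neg_mul_sinh_mul_sub :
    HasDerivAt (fun y => -k * sinh (k * (b - y))) (k ^ 2 * cosh (k * (b - x))) x :=
  ((((hasDerivAt_id x).const_sub b).const_mul k).sinh.const_mul (-k)).congr_deriv
    (by simp only [id]; ring)

end Barrier

theorem cosh_comparison_general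
    (ψ ψ' ψ'' : ℝ → ℝ) (x₀ x₁ μ ε n ψ₀ : ℝ)
    (hx : x₀ < x₁) (hn : 1 ≤ n)
    (hd1 : ∀ x ∈ Icc x₀ x₁, HasDerivAt ψ (ψ' x) x)
    (hd2 : ∀ x ∈ Icc x₀ x₁, HasDerivAt ψ' (ψ'' x) x)
    (hineq : ∀ x ∈ Ioo x₀ x₁, μ ^ 2 / (n * ε ^ 2) * ψ x ≤ ψ'' x)
    (h0 : ψ x₀ = ψ₀) (h1 : ψ' x₁ = 0) :
    ψ x₁ ≤ ψ₀ / Real.cosh (μ / (Real.sqrt n * ε) * (x₁ - x₀)) := by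
  set k := μ / (Real.sqrt n * ε)
  have hk2 : k ^ 2 = μ ^ 2 / (n * ε ^ 2) := by
    rw [div_pow, mul_pow, sq_sqrt (by linarith)]
  have hcomp : ∀ x ∈ Ioo x₀ x₁,
      ψ x * (k ^ 2 * cosh (k * (x₁ - x))) ≤ ψ'' x * cosh (k * (x₁ - x)) := fun x hx => by
    rw [← mul_assoc, mul_comm (ψ x), hk2]
    exact mul_le_mul_of_nonneg_right (hineq x hx) (cosh_pos _).le
  have hanti := antitoneOn_div_of_wronskian_right_nonpos hx.le hd1 hd2
    (fun x _ => hasDerivAt_cosh_mul_sub k x₁ x)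
    (fun x _ => hasDerivAt_neg_mul_sinh_mul_sub k x₁ x) (fun x _ => (cosh_pos _).ne') hcomp
    (by simp [h1])
  have hends := hanti (left_mem_Icc.mpr hx.le) (right_mem_Icc.mpr hx.le) hx.le
  simpa [h0] using hends

/-- Comparison with the `cosh` barrier: the maximum-principle step of the lower bound. -/
theorem cosh_comparison
    (ψ ψ' ψ'' : ℝ → ℝ) (x₀ x₁ μ ε n ψ₀ : ℝ)
    (hx : x₀ < x₁) (hμ : 0 < μ) (hε : 0 < ε) (hn : 1 ≤ n)
    (hd1 : ∀ x ∈ Icc x₀ x₁, HasDerivAt ψ (ψ' x) x)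
    (hd2 : ∀ x ∈ Icc x₀ x₁, HasDerivAt ψ' (ψ'' x) x)
    (hcont : ContinuousOn ψ'' (Icc x₀ x₁))
    (hpos : ∀ x ∈ Icc x₀ x₁, 0 ≤ ψ x)
    (hineq : ∀ x ∈ Ioo x₀ x₁, μ ^ 2 / (n * ε ^ 2) * ψ x ≤ ψ'' x)
    (h0 : ψ x₀ = ψ₀) (hψ₀ : 0 ≤ ψ₀) (h1 : ψ' x₁ = 0) :
    ψ x₁ ≤ ψ₀ / Real.cosh (μ / (Real.sqrt n * ε) * (x₁ - x₀)) :=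
  cosh_comparison_general ψ ψ' ψ'' x₀ x₁ μ ε n ψ₀ hx hn hd1 hd2 hineq h0 h1
end

section
/- Let z : [x₀, x₁] → (1-ρ, 1) be a C² solution of (ε²/2)D(z)(z')² ≤ F(z) with D(u) = (1-u²)^m, F(u) = (1-u²)^n/(2n), n = m+2, m > 2, and suppose z satisfies the Euler–Lagrange equation εD(z)z'' = ε^{-1}F'(z) - (ε/2)D'(z)(z')². Then ψ(x) := (z(x)-1)² satisfies ψ'' = 2z(1+z)^(n-m-1)(1-z)^(n-m)/ε² + 2[(1 + z(1-m))/(1+z)](z')², and if ρ is small enough that 1 + z(1-m) ≤ 0 throughout, then ψ'' ≥ (2(2-ρ)(4-3ρ)/(nε²)) ψ. -/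
open Set

private lemma hid_aux (a n ε ρ C : ℝ) (hε : ε ≠ 0) (hn : n ≠ 0) (h1a : 1 + a ≠ 0)
    (hC : C = 1 + a * (1 - (n - 2))) :
    2*a*(1+a)*(1-a)^2/ε^2 + 2*(C/(1+a))*(1-a^2)^2/(n*ε^2)
      - 2*(2-ρ)*(4-3*ρ)/(n*ε^2)*(a-1)^2
    = 2*(1-a)^2/(n*ε^2)*((1+a)*(1+3*a)-(2-ρ)*(4-3*ρ)) := by
  subst hC; field_simp; ring

/-- The key differential inequality for `ψ = (z-1)²` in the case `n = m + 2`, `m > 2`,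
with `D(u) = (1-u²)^m`, `F(u) = (1-u²)^n/(2n)`. -/
theorem psi_differential_inequality
    (z z' z'' : ℝ → ℝ) (x₀ x₁ m n ε ρ : ℝ)
    (hx : x₀ < x₁) (hm : 2 < m) (hnm : n = m + 2) (hε : 0 < ε)
    (hρ : 0 < ρ) (hρ1 : ρ < 1)
    (hrange : ∀ x ∈ Icc x₀ x₁, z x ∈ Ioo (1 - ρ) 1)
    (hd1 : ∀ x ∈ Icc x₀ x₁, HasDerivAt z (z' x) x)
    (hd2 : ∀ x ∈ Icc x₀ x₁, HasDerivAt z' (z'' x) x)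
    (hEL : ∀ x ∈ Icc x₀ x₁,
      ε * (1 - (z x) ^ 2) ^ m * z'' x =
        ε⁻¹ * (-(z x) * (1 - (z x) ^ 2) ^ (n - 1))
          - (ε / 2) * (-2 * m * z x * (1 - (z x) ^ 2) ^ (m - 1)) * (z' x) ^ 2)
    (hconstraint : ∀ x ∈ Icc x₀ x₁,
      ε ^ 2 / 2 * (1 - (z x) ^ 2) ^ m * (z' x) ^ 2 ≤ (1 - (z x) ^ 2) ^ n / (2 * n))
    (hsign : ∀ x ∈ Icc x₀ x₁, 1 + z x * (1 - m) ≤ 0) :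
    ∀ x ∈ Icc x₀ x₁,
      2 * (z x - 1) * z'' x + 2 * (z' x) ^ 2
        = 2 * z x * (1 + z x) ^ (n - m - 1) * (1 - z x) ^ (n - m) / ε ^ 2
            + 2 * ((1 + z x * (1 - m)) / (1 + z x)) * (z' x) ^ 2 ∧
      2 * (2 - ρ) * (4 - 3 * ρ) / (n * ε ^ 2) * (z x - 1) ^ 2
        ≤ 2 * (z x - 1) * z'' x + 2 * (z' x) ^ 2 := by
  intro x hxmem
  obtain ⟨hz1, hz2⟩ := hrange x hxmem
  have ha0 : 0 < z x := by linarith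
  have hb : (0:ℝ) < 1 - (z x) ^ 2 := by nlinarith
  have h1a : (0:ℝ) < 1 + z x := by linarith
  have h1ma : (0:ℝ) < 1 - z x := by linarith
  have hn : (0:ℝ) < n := by linarith
  have hP : (0:ℝ) < (1 - (z x) ^ 2) ^ m := Real.rpow_pos_of_pos hb m
  have e1 : (1 - (z x) ^ 2) ^ (n - 1) = (1 - (z x) ^ 2) ^ m * (1 - (z x) ^ 2) := by
    rw [show n - 1 = m + 1 by rw [hnm]; ring, Real.rpow_add hb, Real.rpow_one]
  have e2 : (1 - (z x) ^ 2) ^ (m - 1) = (1 - (z x) ^ 2) ^ m / (1 - (z x) ^ 2) := by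
    rw [Real.rpow_sub hb, Real.rpow_one]
  have e3 : (1 + z x) ^ (n - m - 1) = 1 + z x := by
    rw [show n - m - 1 = 1 by rw [hnm]; ring, Real.rpow_one]
  have e4 : (1 - z x) ^ (n - m) = (1 - z x) ^ (2:ℕ) := by
    rw [show n - m = ((2:ℕ):ℝ) by rw [hnm]; norm_num, Real.rpow_natCast]
  have e5 : (1 - (z x) ^ 2) ^ n = (1 - (z x) ^ 2) ^ m * (1 - (z x) ^ 2) ^ (2:ℕ) := by
    rw [hnm, Real.rpow_add hb, show ((2:ℝ)) = ((2:ℕ):ℝ) by norm_num, Real.rpow_natCast]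
  have hEL' := hEL x hxmem
  rw [e1, e2] at hEL'
  -- solve for z''
  have hz'' : z'' x = -(z x) * (1 - (z x)^2) / ε^2 + m * z x * (z' x)^2 / (1 - (z x)^2) := by
    have h2 : ε * (1 - (z x) ^ 2) ^ m * z'' x
        = ε * (1 - (z x) ^ 2) ^ m * (-(z x) * (1 - (z x)^2) / ε^2 + m * z x * (z' x)^2 / (1 - (z x)^2)) := by
      rw [hEL']
      field_simp
      ring
    have := mul_left_cancel₀ (mul_ne_zero hε.ne' hP.ne') h2
    exact this
  have key : 2 * (z x - 1) * z'' x + 2 * (z' x) ^ 2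
      = 2 * z x * (1 + z x) * (1 - z x) ^ (2:ℕ) / ε ^ 2
          + 2 * ((1 + z x * (1 - m)) / (1 + z x)) * (z' x) ^ 2 := by
    rw [hz'']
    field_simp
    ring
  constructor
  · rw [e3, e4]; exact key
  · rw [key]
    -- bound z'^2
    have hc := hconstraint x hxmem
    rw [e5] at hc
    have hc' : (1 - z x ^ 2) ^ m * (ε ^ 2 / 2 * z' x ^ 2)
        ≤ (1 - z x ^ 2) ^ m * ((1 - z x ^ 2) ^ (2:ℕ) / (2 * n)) := by
      linarith [hc,
        (by ring : (1 - z x ^ 2) ^ m * (ε ^ 2 / 2 * z' x ^ 2)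
          = ε ^ 2 / 2 * (1 - z x ^ 2) ^ m * z' x ^ 2),
        (by ring : (1 - z x ^ 2) ^ m * ((1 - z x ^ 2) ^ (2:ℕ) / (2 * n))
          = (1 - z x ^ 2) ^ m * (1 - z x ^ 2) ^ (2:ℕ) / (2 * n))]
    have h6 := le_of_mul_le_mul_left hc' hP
    have hw2 : (z' x) ^ 2 ≤ (1 - (z x)^2)^(2:ℕ) / (n * ε^2) := by
      rw [le_div_iff₀ (by positivity)] at h6
      rw [le_div_iff₀ (by positivity)]
      nlinarith [h6]
    have hsgn := hsign x hxmem
    have hcoef : 2 * ((1 + z x * (1 - m)) / (1 + z x)) ≤ 0 := by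
      apply mul_nonpos_of_nonneg_of_nonpos (by norm_num)
      exact div_nonpos_of_nonpos_of_nonneg hsgn h1a.le
    have step : 2 * ((1 + z x * (1 - m)) / (1 + z x)) * (1 - (z x)^2)^(2:ℕ) / (n * ε^2)
        ≤ 2 * ((1 + z x * (1 - m)) / (1 + z x)) * (z' x) ^ 2 := by
      rw [mul_div_assoc]
      exact mul_le_mul_of_nonpos_left hw2 hcoef
    have main : 2 * (2 - ρ) * (4 - 3 * ρ) / (n * ε ^ 2) * (z x - 1) ^ 2
        ≤ 2 * z x * (1 + z x) * (1 - z x) ^ (2:ℕ) / ε ^ 2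
          + 2 * ((1 + z x * (1 - m)) / (1 + z x)) * (1 - (z x)^2)^(2:ℕ) / (n * ε^2) := by
      have hfac : (2 - ρ) * (4 - 3*ρ) ≤ (1 + z x) * (1 + 3 * z x) :=
        mul_le_mul (by linarith) (by linarith) (by linarith) (by linarith)
      have hid := hid_aux (z x) n ε ρ (1 + z x * (1 - m)) hε.ne' hn.ne' h1a.ne'
        (by rw [hnm]; ring)
      have hT : (0:ℝ) ≤ 2 * (1 - z x)^2 / (n * ε^2) :=
        div_nonneg (by positivity) (mul_nonneg hn.le (by positivity))
      have hprod := mul_nonneg hT (by linarith : (0:ℝ) ≤ (1 + z x) * (1 + 3 * z x) - (2 - ρ) * (4 - 3*ρ))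
      linarith [hid, hprod]
    linarith [step, main]
end
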